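/- Let n ∈ ℕ, let γ_j, ζ_j ∈ ℂ be nonzero for j = 1,…,n, let β_j ∈ ℂ, and let g_j : ℂ → ℂ be twice differentiable. Set α_j = γ_j²/ζ_j and λ_j = −γ_j³/ζ_j², and define ϑ : ℂ⁴ → ℂ (variables (x,r,t,z)) by ϑ = Σ_{j=1}^{n} g_j(α_j x + γ_j r + ζ_j t + λ_j z + β_j). Then ϑ satisfies the higher-symmetry system: ϑ_{rr} − ϑ_{xt} = 0, ϑ_{rx} + ϑ_{tz} = 0, and ϑ_{xx} + ϑ_{rz} = 0 at every point (subclass II). -/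

import Mathlib

/-- Partial derivative with respect to the first argument. -/
noncomputable def pd1 (f : ℂ → ℂ → ℂ → ℂ → ℂ) (a b c d : ℂ) : ℂ :=
  deriv (fun s => f s b c d) a

/-- Partial derivative with respect to the second argument. -/
noncomputable def pd2 (f : ℂ → ℂ → ℂ → ℂ → ℂ) (a b c d : ℂ) : ℂ :=
  deriv (fun s => f a s c d) b

/-- Partial derivative with respect to the third argument. -/
noncomputable def pd3 (f : ℂ → ℂ → ℂ → ℂ → ℂ) (a b c d : ℂ) : ℂ :=
  deriv (fun s => f a b s d) c

/-- Partial derivative with respect to the fourth argument. -/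
noncomputable def pd4 (f : ℂ → ℂ → ℂ → ℂ → ℂ) (a b c d : ℂ) : ℂ :=
  deriv (fun s => f a b c s) d

/-!
Each summand is a plane wave `g (k · p + β)` with wave vector `k = (α, γ, ζ, λ)`, so every second
partial `∂ᵢ∂ⱼ` of it is `kᵢ kⱼ g''` at the same point. The system therefore reduces to the three
quadratic relations `γ² = αζ`, `αγ + λζ = 0`, `α² + λγ = 0`, which hold for
`α = γ²/ζ`, `λ = -γ³/ζ²`.
-/

section PlaneWave

variable {ι : Type*} [Fintype ι]

def planeWaveSum (G : ι → ℂ → ℂ) (e k₁ k₂ k₃ k₄ β : ι → ℂ) : ℂ → ℂ → ℂ → ℂ → ℂ :=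
  fun x r t z => ∑ j, e j * G j (k₁ j * x + k₂ j * r + k₃ j * t + k₄ j * z + β j)

theorem hasDerivAt_sum_mul_comp {G : ι → ℂ → ℂ} (hG : ∀ j, Differentiable ℂ (G j))
    (e : ι → ℂ) {L : ι → ℂ → ℂ} {c : ι → ℂ} {s : ℂ} (hL : ∀ j, HasDerivAt (L j) (c j) s) :
    HasDerivAt (fun y => ∑ j, e j * G j (L j y)) (∑ j, e j * c j * deriv (G j) (L j s)) s := by
  refine HasDerivAt.fun_sum fun j _ => ?_
  rw [mul_right_comm, mul_assoc]
  exact (((hG j) (L j s)).hasDerivAt.comp s (hL j)).const_mul (e j)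

theorem hasDerivAt_affine_of_eq {L : ℂ → ℂ} (c d s : ℂ) (hL : ∀ y, L y = c * y + d) :
    HasDerivAt L c s := by
  rw [funext hL]
  simpa using ((hasDerivAt_id s).const_mul c).add_const d

theorem planeWaveSum_add_planeWaveSum_eq_zero (G : ι → ℂ → ℂ) {e e' : ι → ℂ}
    (h : ∀ j, e j + e' j = 0) (k₁ k₂ k₃ k₄ β : ι → ℂ) (x r t z : ℂ) :
    planeWaveSum G e k₁ k₂ k₃ k₄ β x r t z + planeWaveSum G e' k₁ k₂ k₃ k₄ β x r t z = 0 := by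
  simp only [planeWaveSum, ← Finset.sum_add_distrib, ← add_mul, h, zero_mul, Finset.sum_const_zero]

variable {G : ι → ℂ → ℂ} {e k₁ k₂ k₃ k₄ β : ι → ℂ}

theorem pd1_planeWaveSum (hG : ∀ j, Differentiable ℂ (G j)) :
    pd1 (planeWaveSum G e k₁ k₂ k₃ k₄ β)
      = planeWaveSum (fun j => deriv (G j)) (fun j => e j * k₁ j) k₁ k₂ k₃ k₄ β := by
  ext x r t z
  exact (hasDerivAt_sum_mul_comp hG e fun j =>
    hasDerivAt_affine_of_eq _ (k₂ j * r + k₃ j * t + k₄ j * z + β j) x fun _ => by ring).deriv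

theorem pd2_planeWaveSum (hG : ∀ j, Differentiable ℂ (G j)) :
    pd2 (planeWaveSum G e k₁ k₂ k₃ k₄ β)
      = planeWaveSum (fun j => deriv (G j)) (fun j => e j * k₂ j) k₁ k₂ k₃ k₄ β := by
  ext x r t z
  exact (hasDerivAt_sum_mul_comp hG e fun j =>
    hasDerivAt_affine_of_eq _ (k₁ j * x + k₃ j * t + k₄ j * z + β j) r fun _ => by ring).deriv

theorem pd3_planeWaveSum (hG : ∀ j, Differentiable ℂ (G j)) :
    pd3 (planeWaveSum G e k₁ k₂ k₃ k₄ β)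
      = planeWaveSum (fun j => deriv (G j)) (fun j => e j * k₃ j) k₁ k₂ k₃ k₄ β := by
  ext x r t z
  exact (hasDerivAt_sum_mul_comp hG e fun j =>
    hasDerivAt_affine_of_eq _ (k₁ j * x + k₂ j * r + k₄ j * z + β j) t fun _ => by ring).deriv

theorem pd4_planeWaveSum (hG : ∀ j, Differentiable ℂ (G j)) :
    pd4 (planeWaveSum G e k₁ k₂ k₃ k₄ β)
      = planeWaveSum (fun j => deriv (G j)) (fun j => e j * k₄ j) k₁ k₂ k₃ k₄ β := by
  ext x r t z
  exact (hasDerivAt_sum_mul_comp hG e fun j =>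
    hasDerivAt_affine_of_eq _ (k₁ j * x + k₂ j * r + k₃ j * t + β j) z fun _ => by ring).deriv

end PlaneWave

theorem stmt12_general (n : ℕ) (γ ζ : Fin n → ℂ)
    (hζ : ∀ j, ζ j ≠ 0) (β : Fin n → ℂ)
    (g : Fin n → ℂ → ℂ) (hg : ∀ j, ContDiff ℂ 2 (g j))
    (α lam : Fin n → ℂ)
    (hα : ∀ j, α j = (γ j) ^ 2 / ζ j)
    (hlam : ∀ j, lam j = -((γ j) ^ 3 / (ζ j) ^ 2))
    (ϑ : ℂ → ℂ → ℂ → ℂ → ℂ)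
    (hϑ : ϑ = fun x r t z =>
      ∑ j : Fin n, g j (α j * x + γ j * r + ζ j * t + lam j * z + β j)) :
    ∀ x r t z : ℂ,
      pd2 (pd2 ϑ) x r t z - pd1 (pd3 ϑ) x r t z = 0
      ∧ pd2 (pd1 ϑ) x r t z + pd3 (pd4 ϑ) x r t z = 0
      ∧ pd1 (pd1 ϑ) x r t z + pd2 (pd4 ϑ) x r t z = 0 := by
  have hg₁ : ∀ j, Differentiable ℂ (g j) := fun j => (hg j).differentiable two_ne_zero
  have hg₂ : ∀ j, Differentiable ℂ (deriv (g j)) := fun j => (hg j).differentiable_deriv_two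
  have hϑ_wave : ϑ = planeWaveSum g (fun _ => 1) α γ ζ lam β := by
    ext x r t z
    simp only [hϑ, planeWaveSum, one_mul]
  intro x r t z
  simp only [hϑ_wave, pd1_planeWaveSum hg₁, pd2_planeWaveSum hg₁,
    pd3_planeWaveSum hg₁, pd4_planeWaveSum hg₁,
    pd1_planeWaveSum hg₂, pd2_planeWaveSum hg₂, pd3_planeWaveSum hg₂]
  refine ⟨sub_eq_zero.mpr (congrArg (planeWaveSum _ · _ _ _ _ _ x r t z) (funext fun j => ?_)),
    planeWaveSum_add_planeWaveSum_eq_zero _ (fun j => ?_) _ _ _ _ _ _ _ _ _,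
    planeWaveSum_add_planeWaveSum_eq_zero _ (fun j => ?_) _ _ _ _ _ _ _ _ _⟩
  all_goals
    simp only [hα, hlam]
    field_simp [hζ j]
  all_goals ring

/-- the functional-sum ansatz (subclass II) solves the
higher-symmetry system arising from the Legendre-transformed second heavenly
equation. -/
theorem stmt12 (n : ℕ) (γ ζ : Fin n → ℂ)
    (hγ : ∀ j, γ j ≠ 0) (hζ : ∀ j, ζ j ≠ 0) (β : Fin n → ℂ)
    (g : Fin n → ℂ → ℂ) (hg : ∀ j, ContDiff ℂ 2 (g j))
    (α lam : Fin n → ℂ)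
    (hα : ∀ j, α j = (γ j) ^ 2 / ζ j)
    (hlam : ∀ j, lam j = -((γ j) ^ 3 / (ζ j) ^ 2))
    (ϑ : ℂ → ℂ → ℂ → ℂ → ℂ)
    (hϑ : ϑ = fun x r t z =>
      ∑ j : Fin n, g j (α j * x + γ j * r + ζ j * t + lam j * z + β j)) :
    ∀ x r t z : ℂ,
      pd2 (pd2 ϑ) x r t z - pd1 (pd3 ϑ) x r t z = 0
      ∧ pd2 (pd1 ϑ) x r t z + pd3 (pd4 ϑ) x r t z = 0
      ∧ pd1 (pd1 ϑ) x r t z + pd2 (pd4 ϑ) x r t z = 0 :=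
  stmt12_general n γ ζ hζ β g hg α lam hα hlam ϑ hϑ
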